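/- arXiv:1109.6580 — 4 statements merged into one kernel-verified Lean document; each statement's English description precedes it below -/
import Mathlib

section
/- For every θ ∈ [0,1] and every integer n ≥ 1, ∫_a^b G_n(x) dx = 0 if n is odd, and ∫_a^b G_n(x) dx = (b-a)^{n+1} / (n!·2^n) · (1/(n+1) - θ) if n is even. -/
open MeasureTheory intervalIntegral

/-- The Peano kernel `G_n` from the paper (first branch on `[a,(a+b)/2]`,
second branch on `((a+b)/2, b]`). -/
noncomputable def G (a b θ : ℝ) (n : ℕ) (x : ℝ) : ℝ :=
  if x ≤ (a + b) / 2 then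
    (x - a) ^ (n - 1) / (n.factorial : ℝ) * (x - a - θ * n * (b - a) / 2)
  else
    (x - b) ^ (n - 1) / (n.factorial : ℝ) * (x - b + θ * n * (b - a) / 2)

/-- The quadrature functional `F_n`. -/
noncomputable def quadF (a b θ : ℝ) (n : ℕ) (f : ℝ → ℝ) : ℝ :=
  (b - a) * ((1 - θ) * f ((a + b) / 2) + θ * (f a + f b) / 2)
    + ∑ i ∈ Finset.Icc 1 ((n - 1) / 2),
        (1 - θ * (2 * (i : ℝ) + 1)) * (b - a) ^ (2 * i + 1)
          / (((2 * i + 1).factorial : ℝ) * 2 ^ (2 * i)) * iteratedDeriv (2 * i) f ((a + b) / 2)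

/-- `σ(g) = ∫ g² - (1/(b-a)) (∫ g)²`. -/
noncomputable def qsigma (a b : ℝ) (g : ℝ → ℝ) : ℝ :=
  (∫ x in a..b, (g x) ^ 2) - (1 / (b - a)) * (∫ x in a..b, g x) ^ 2
/-! On each half of `[a, b]` the kernel is a polynomial. With `h = (b - a) / 2` and
`c = θ n h`, the two halves together give `((h^(n+1) - (-h)^(n+1)) / (n+1) - c (h^n + (-h)^n) / n) / n!`,
and the parity of `n` decides whether the two powers of `±h` cancel or double. -/

open Set

theorem integral_sub_pow_mul_sub (k : ℕ) (p q c : ℝ) :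
    ∫ x in p..q, (x - p) ^ k * (x - p - c)
      = (q - p) ^ (k + 2) / (k + 2) - c * (q - p) ^ (k + 1) / (k + 1) := by
  rw [intervalIntegral.integral_comp_sub_right (fun u => u ^ k * (u - c)), sub_self]
  simp only [mul_sub, ← pow_succ, mul_comm _ c]
  rw [integral_sub (intervalIntegrable_pow _) ((intervalIntegrable_pow _).const_mul c),
    intervalIntegral.integral_const_mul, integral_pow, integral_pow]
  push_cast
  ring

section PeanoKernel

variable {a b θ : ℝ} {k : ℕ}

theorem G_succ_of_le {x : ℝ} (hx : x ≤ (a + b) / 2) :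
    G a b θ (k + 1) x
      = (x - a) ^ k * (x - a - θ * (k + 1) * (b - a) / 2) / (k + 1).factorial := by
  rw [G, if_pos hx, Nat.add_sub_cancel]
  push_cast
  ring

-- The shape `x - b - -c` matches `integral_sub_pow_mul_sub`.
theorem G_succ_of_lt {x : ℝ} (hx : (a + b) / 2 < x) :
    G a b θ (k + 1) x
      = (x - b) ^ k * (x - b - -(θ * (k + 1) * (b - a) / 2)) / (k + 1).factorial := by
  rw [G, if_neg hx.not_ge, Nat.add_sub_cancel]
  push_cast
  ring

theorem integral_G_succ (hab : a ≤ b) :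
    ∫ x in a..b, G a b θ (k + 1) x
      = ((((b - a) / 2) ^ (k + 2) - (-((b - a) / 2)) ^ (k + 2)) / (k + 2)
          - θ * (k + 1) * (b - a) / 2 * (((b - a) / 2) ^ (k + 1) + (-((b - a) / 2)) ^ (k + 1))
            / (k + 1)) / (k + 1).factorial := by
  set m := (a + b) / 2 with hm
  set c := θ * (k + 1) * (b - a) / 2
  have hleft : EqOn (G a b θ (k + 1)) (fun x => (x - a) ^ k * (x - a - c) / (k + 1).factorial)
      (uIoo a m) := by
    rw [uIoo_of_le (by linarith [hm])]
    exact fun x hx => G_succ_of_le hx.2.le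
  have hright : EqOn (G a b θ (k + 1)) (fun x => (x - b) ^ k * (x - b - -c) / (k + 1).factorial)
      (uIoo m b) := by
    rw [uIoo_of_le (by linarith [hm])]
    exact fun x hx => G_succ_of_lt hx.1
  rw [← intervalIntegral.integral_add_adjacent_intervals (b := m)
      ((Continuous.intervalIntegrable (by fun_prop) _ _).congr_uIoo hleft.symm)
      ((Continuous.intervalIntegrable (by fun_prop) _ _).congr_uIoo hright.symm),
    intervalIntegral.integral_congr_uIoo hleft, intervalIntegral.integral_congr_uIoo hright,
    intervalIntegral.integral_symm b m, intervalIntegral.integral_div, intervalIntegral.integral_div,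
    integral_sub_pow_mul_sub, integral_sub_pow_mul_sub,
    show m - a = (b - a) / 2 by ring, show m - b = -((b - a) / 2) by ring]
  ring

end PeanoKernel

theorem stmt1_general (a b θ : ℝ) (n : ℕ)
    (hab : a < b) (hn : 1 ≤ n) :
    (Odd n → (∫ x in a..b, G a b θ n x) = 0) ∧
    (Even n → (∫ x in a..b, G a b θ n x)
      = (b - a) ^ (n + 1) / ((n.factorial : ℝ) * 2 ^ n) * (1 / ((n : ℝ) + 1) - θ)) := by
  obtain ⟨k, rfl⟩ := Nat.exists_eq_add_of_le' hn
  rw [integral_G_succ hab.le]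
  constructor
  · intro hodd
    have hk : Even k := by simpa [Nat.odd_add_one] using hodd
    rw [(hk.add even_two).neg_pow, hk.add_one.neg_pow]
    ring
  · intro heven
    have hk : Odd k := Nat.not_even_iff_odd.1 (Nat.even_add_one.1 heven)
    rw [(hk.add_even even_two).neg_pow, heven.neg_pow]
    push_cast
    simp only [div_pow]
    field_simp
    ring

theorem stmt1 (a b θ : ℝ) (n : ℕ)
    (hab : a < b) (hθ : θ ∈ Set.Icc (0 : ℝ) 1) (hn : 1 ≤ n) :
    (Odd n → (∫ x in a..b, G a b θ n x) = 0) ∧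
    (Even n → (∫ x in a..b, G a b θ n x)
      = (b - a) ^ (n + 1) / ((n.factorial : ℝ) * 2 ^ n) * (1 / ((n : ℝ) + 1) - θ)) :=
  stmt1_general a b θ n hab hn
end

section
/- For every θ ∈ [0,1] and every integer m ≥ 1, the maximum over x ∈ [a,b] of |G_{2m}(x) - (1/(b-a)) ∫_a^b G_{2m}(t) dt| equals: max{θ - 1/(2m+1), θ(2m-1) - 2m/(2m+1)} · (b-a)^{2m}/((2m)!·2^{2m}) if θ(2m-1) ≥ 1; and max{|θ - 1/(2m+1)|, |θ(2m-1) - 2m/(2m+1)|, |θ - 1/(2m+1) - θ^{2m}(2m-1)^{2m-1}|} · (b-a)^{2m}/((2m)!·2^{2m}) if θ(2m-1) < 1. -/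
/-!
Write `h = (b - a) / 2`. On the left half of `[a, b]`, `G_n (a + h u) = h ^ n / n! * p u` for
`u ∈ [0, 1]`, where `p u = u ^ n - n θ u ^ (n - 1)`; for even `n` the kernel is symmetric about
`(a + b) / 2`, so the mean of `G_n` over `[a, b]`, which is `h ^ n / n! * (1 / (n + 1) - θ)`, and
the set of values of `G_n` on `[a, b]` are both read off from `p` on `[0, 1]`. Since
`p' u = n u ^ (n - 2) (u - θ (n - 1))`, `p` decreases up to `θ (n - 1)` and increases after it, so
`|p - (1 / (n + 1) - θ)|` is largest at `u = 0`, at `u = 1`, or, when `θ (n - 1) < 1`, at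
`u = θ (n - 1)`; these are the terms of the maxima.
-/

open MeasureTheory intervalIntegral

open Set

theorem isGreatest_abs_image_Icc_of_antitoneOn_of_monotoneOn {α β : Type*} [LinearOrder α]
    [AddCommGroup β] [LinearOrder β] [IsOrderedAddMonoid β] {f : α → β} {c e d : α}
    (hce : c ≤ e) (hed : e ≤ d) (hanti : AntitoneOn f (Icc c e))
    (hmono : MonotoneOn f (Icc e d)) :
    IsGreatest ((fun x => |f x|) '' Icc c d) (max (max |f c| |f d|) |f e|) := by
  have hc : c ∈ Icc c e := ⟨le_rfl, hce⟩
  have he : e ∈ Icc c e := ⟨hce, le_rfl⟩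
  have he' : e ∈ Icc e d := ⟨le_rfl, hed⟩
  have hd : d ∈ Icc e d := ⟨hed, le_rfl⟩
  refine ⟨?_, ?_⟩
  · rcases le_total (max |f c| |f d|) |f e| with h | h
    · exact ⟨e, ⟨hce, hed⟩, (max_eq_right h).symm⟩
    rcases le_total |f c| |f d| with h' | h'
    · exact ⟨d, ⟨hce.trans hed, le_rfl⟩, by rw [max_eq_left h, max_eq_right h']⟩
    · exact ⟨c, ⟨le_rfl, hce.trans hed⟩, by rw [max_eq_left h, max_eq_left h']⟩
  rintro _ ⟨x, hx, rfl⟩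
  rcases le_total x e with hxe | hex
  · have hx' : x ∈ Icc c e := ⟨hx.1, hxe⟩
    calc |f x| ≤ max |f e| |f c| := abs_le_max_abs_abs (hanti hx' he hxe) (hanti hc hx' hx.1)
      _ ≤ _ := max_le (le_max_right _ _) ((le_max_left _ _).trans (le_max_left _ _))
  · have hx' : x ∈ Icc e d := ⟨hex, hx.2⟩
    calc |f x| ≤ max |f e| |f d| := abs_le_max_abs_abs (hmono he' hx' hex) (hmono hx' hd hx.2)
      _ ≤ _ := max_le (le_max_right _ _) ((le_max_right _ _).trans (le_max_left _ _))

noncomputable def peanoProfile (θ : ℝ) (n : ℕ) (u : ℝ) : ℝ :=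
  u ^ n - n * θ * u ^ (n - 1)

section peanoProfile

variable {θ : ℝ} {n : ℕ}

theorem hasDerivAt_peanoProfile (hn : 2 ≤ n) (u : ℝ) :
    HasDerivAt (peanoProfile θ n) (n * u ^ (n - 2) * (u - θ * (n - 1))) u := by
  obtain ⟨k, rfl⟩ : ∃ k, n = k + 2 := ⟨n - 2, by omega⟩
  have h := (hasDerivAt_pow (k + 2) u).sub
    ((hasDerivAt_pow (k + 1) u).const_mul ((k + 2 : ℕ) * θ))
  simp only [Nat.add_sub_cancel] at h ⊢
  exact h.congr_deriv (by push_cast; ring)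

theorem peanoProfile_antitoneOn (hn : 2 ≤ n) :
    AntitoneOn (peanoProfile θ n) (Icc 0 (θ * (n - 1))) := by
  refine antitoneOn_of_deriv_nonpos (convex_Icc _ _)
    (fun u _ => (hasDerivAt_peanoProfile hn u).continuousAt.continuousWithinAt)
    (fun u _ => (hasDerivAt_peanoProfile hn u).differentiableAt.differentiableWithinAt) ?_
  intro u hu
  rw [interior_Icc] at hu
  rw [(hasDerivAt_peanoProfile hn u).deriv]
  exact mul_nonpos_of_nonneg_of_nonpos (by have := hu.1.le; positivity) (by linarith [hu.2])

theorem peanoProfile_monotoneOn (hn : 2 ≤ n) (hθ : 0 ≤ θ) :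
    MonotoneOn (peanoProfile θ n) (Ici (θ * (n - 1))) := by
  have hc : 0 ≤ θ * ((n : ℝ) - 1) :=
    mul_nonneg hθ (by linarith [show (2 : ℝ) ≤ n by exact_mod_cast hn])
  refine monotoneOn_of_deriv_nonneg (convex_Ici _)
    (fun u _ => (hasDerivAt_peanoProfile hn u).continuousAt.continuousWithinAt)
    (fun u _ => (hasDerivAt_peanoProfile hn u).differentiableAt.differentiableWithinAt) ?_
  intro u hu
  rw [interior_Ici] at hu
  rw [(hasDerivAt_peanoProfile hn u).deriv]
  have hu0 : 0 ≤ u := hc.trans (le_of_lt hu)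
  exact mul_nonneg (by positivity) (by linarith [mem_Ioi.1 hu])

theorem peanoProfile_zero (hn : 2 ≤ n) : peanoProfile θ n 0 = 0 := by
  simp [peanoProfile, zero_pow (show n ≠ 0 by omega), zero_pow (show n - 1 ≠ 0 by omega)]

theorem peanoProfile_one : peanoProfile θ n 1 = 1 - n * θ := by
  simp [peanoProfile]

theorem peanoProfile_critical (hn : 1 ≤ n) :
    peanoProfile θ n (θ * (n - 1)) = -(θ ^ n * (n - 1) ^ (n - 1)) := by
  obtain ⟨k, rfl⟩ : ∃ k, n = k + 1 := ⟨n - 1, by omega⟩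
  simp only [peanoProfile, Nat.add_sub_cancel, pow_succ, mul_pow]
  push_cast
  ring

theorem integral_peanoProfile (hn : 1 ≤ n) :
    ∫ u in (0 : ℝ)..1, peanoProfile θ n u = 1 / (n + 1) - θ := by
  obtain ⟨k, rfl⟩ : ∃ k, n = k + 1 := ⟨n - 1, by omega⟩
  simp only [peanoProfile, Nat.add_sub_cancel]
  rw [intervalIntegral.integral_sub (by apply Continuous.intervalIntegrable; fun_prop)
    (by apply Continuous.intervalIntegrable; fun_prop), intervalIntegral.integral_const_mul,
    integral_pow, integral_pow]
  push_cast
  field_simp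
  ring

theorem isGreatest_abs_peanoProfile_sub_of_one_le (hn : 2 ≤ n) (h : 1 ≤ θ * (n - 1)) :
    IsGreatest ((fun u => |peanoProfile θ n u - (1 / (n + 1) - θ)|) '' Icc 0 1)
      (max (θ - 1 / (n + 1)) (θ * (n - 1) - n / (n + 1))) := by
  have hn' : (2 : ℝ) ≤ n := by exact_mod_cast hn
  have hanti : AntitoneOn (fun u => peanoProfile θ n u - (1 / (n + 1) - θ)) (Icc 0 1) :=
    fun x hx y hy hxy => sub_le_sub_right
      ((peanoProfile_antitoneOn hn).mono (Icc_subset_Icc_right h) hx hy hxy) _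
  have key := isGreatest_abs_image_Icc_of_antitoneOn_of_monotoneOn zero_le_one le_rfl hanti
    ((subsingleton_Icc_of_ge le_rfl).monotoneOn _)
  rw [peanoProfile_zero hn, peanoProfile_one, max_assoc, max_self] at key
  have h1 : 1 / ((n : ℝ) + 1) ≤ θ := by
    have hθ : 0 < θ := pos_of_mul_pos_left (one_pos.trans_le h) (by linarith)
    rw [div_le_iff₀ (by linarith)]; linarith
  have h2 : 1 - n * θ - (1 / (n + 1) - θ) = -(θ * (n - 1) - n / (n + 1)) := by
    field_simp; ring
  have h3 : 0 ≤ θ * (n - 1) - n / (n + 1) := by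
    have : (n : ℝ) / (n + 1) ≤ 1 := (div_le_one (by linarith)).2 (by linarith)
    linarith
  rwa [h2, abs_neg, abs_of_nonneg h3, zero_sub, neg_sub, abs_of_nonneg (by linarith)] at key

theorem isGreatest_abs_peanoProfile_sub_of_lt_one (hn : 2 ≤ n) (hθ : 0 ≤ θ)
    (h : θ * (n - 1) < 1) :
    IsGreatest ((fun u => |peanoProfile θ n u - (1 / (n + 1) - θ)|) '' Icc 0 1)
      (max (max |θ - 1 / (n + 1)| |θ * (n - 1) - n / (n + 1)|)
        |θ - 1 / (n + 1) - θ ^ n * (n - 1) ^ (n - 1)|) := by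
  have hn' : (2 : ℝ) ≤ n := by exact_mod_cast hn
  have hc : 0 ≤ θ * ((n : ℝ) - 1) := mul_nonneg hθ (by linarith)
  have key := isGreatest_abs_image_Icc_of_antitoneOn_of_monotoneOn
    (f := fun u => peanoProfile θ n u - (1 / (n + 1) - θ)) hc h.le
    (fun x hx y hy hxy => sub_le_sub_right (peanoProfile_antitoneOn hn hx hy hxy) _)
    (fun x hx y hy hxy => sub_le_sub_right
      ((peanoProfile_monotoneOn hn hθ).mono Icc_subset_Ici_self hx hy hxy) _)
  rw [peanoProfile_zero hn, peanoProfile_one, peanoProfile_critical (by omega)] at key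
  have h1 : 1 - n * θ - (1 / (n + 1) - θ) = -(θ * (n - 1) - n / (n + 1)) := by
    field_simp; ring
  have h2 : -(θ ^ n * (n - 1) ^ (n - 1)) - (1 / (n + 1) - θ)
      = θ - 1 / (n + 1) - θ ^ n * (n - 1) ^ (n - 1) := by ring
  rwa [h1, h2, abs_neg, zero_sub, neg_sub] at key

end peanoProfile

section G

variable {a b θ : ℝ} {n : ℕ}

theorem G_add_half_mul_eq (hn : n ≠ 0) (hab : a ≤ b) {u : ℝ} (hu : u ≤ 1) :
    G a b θ n (a + (b - a) / 2 * u) = ((b - a) / 2) ^ n / n.factorial * peanoProfile θ n u := by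
  have hmid : a + (b - a) / 2 * u ≤ (a + b) / 2 := by nlinarith
  obtain ⟨k, rfl⟩ : ∃ k, n = k + 1 := ⟨n - 1, by omega⟩
  rw [G, if_pos hmid, peanoProfile, Nat.add_sub_cancel,
    show a + (b - a) / 2 * u - a = (b - a) / 2 * u by ring, mul_pow]
  push_cast
  ring

theorem G_reflect (hn : Even n) (hn0 : n ≠ 0) (x : ℝ) :
    G a b θ n (a + b - x) = G a b θ n x := by
  have hodd : Odd (n - 1) := Nat.Even.sub_odd (by omega) hn odd_one
  unfold G
  rcases le_or_gt x ((a + b) / 2) with h₁ | h₁ <;>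
    rcases le_or_gt (a + b - x) ((a + b) / 2) with h₂ | h₂
  · rw [show a + b - x = x by linarith]
  · rw [if_pos h₁, if_neg h₂.not_ge, show a + b - x - b = -(x - a) by ring, hodd.neg_pow]
    ring
  · rw [if_neg h₁.not_ge, if_pos h₂, show a + b - x - a = -(x - b) by ring, hodd.neg_pow]
    ring
  · linarith

theorem continuous_G (hn : Even n) (hn0 : n ≠ 0) : Continuous (G a b θ n) := by
  have hodd : Odd (n - 1) := Nat.Even.sub_odd (by omega) hn odd_one
  refine Continuous.if_le (by fun_prop) (by fun_prop) continuous_id continuous_const fun x hx => ?_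
  rw [show x - b = -(x - a) by linarith, hodd.neg_pow]
  ring

theorem integral_G (hn : Even n) (hn0 : n ≠ 0) (hab : a < b) :
    ∫ x in a..b, G a b θ n x
      = (b - a) * (((b - a) / 2) ^ n / n.factorial * (1 / (n + 1) - θ)) := by
  have hc : Continuous (G a b θ n) := continuous_G hn hn0
  have hh : (b - a) / 2 ≠ 0 := by linarith
  have hleft : ∫ x in a..(a + b) / 2, G a b θ n x
      = (b - a) / 2 * (((b - a) / 2) ^ n / n.factorial * (1 / (n + 1) - θ)) := by
    have hsub := intervalIntegral.integral_comp_add_mul (a := 0) (b := 1) (G a b θ n) hh a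
    rw [mul_zero, add_zero, mul_one, show a + (b - a) / 2 = (a + b) / 2 by ring,
      integral_congr fun u hu =>
        G_add_half_mul_eq hn0 hab.le (uIcc_of_le (zero_le_one' ℝ) ▸ hu).2,
      intervalIntegral.integral_const_mul, integral_peanoProfile (by omega), smul_eq_mul] at hsub
    rw [hsub, mul_inv_cancel_left₀ hh]
  have hright : ∫ x in (a + b) / 2..b, G a b θ n x = ∫ x in a..(a + b) / 2, G a b θ n x :=
    calc ∫ x in (a + b) / 2..b, G a b θ n x = ∫ x in (a + b) / 2..b, G a b θ n (a + b - x) :=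
          integral_congr fun x _ => (G_reflect hn hn0 x).symm
      _ = ∫ x in a..(a + b) / 2, G a b θ n x := by
          rw [intervalIntegral.integral_comp_sub_left]; congr 1 <;> ring
  rw [← integral_add_adjacent_intervals (hc.intervalIntegrable a ((a + b) / 2))
    (hc.intervalIntegrable _ b), hright, hleft]
  ring

theorem image_G_Icc (hn : Even n) (hn0 : n ≠ 0) (hab : a < b) :
    G a b θ n '' Icc a b
      = (fun u => ((b - a) / 2) ^ n / n.factorial * peanoProfile θ n u) '' Icc 0 1 := by
  have hh : 0 < (b - a) / 2 := by linarith
  ext y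
  constructor
  · rintro ⟨x, hx, rfl⟩
    rcases le_total x ((a + b) / 2) with hxm | hmx
    · have hu : (x - a) / ((b - a) / 2) ≤ 1 := (div_le_one hh).2 (by linarith)
      refine ⟨(x - a) / ((b - a) / 2), ⟨div_nonneg (by linarith [hx.1]) hh.le, hu⟩, ?_⟩
      dsimp only
      rw [← G_add_half_mul_eq hn0 hab.le hu, mul_div_cancel₀ _ hh.ne', add_sub_cancel]
    · have hu : (b - x) / ((b - a) / 2) ≤ 1 := (div_le_one hh).2 (by linarith)
      refine ⟨(b - x) / ((b - a) / 2), ⟨div_nonneg (by linarith [hx.2]) hh.le, hu⟩, ?_⟩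
      dsimp only
      rw [← G_add_half_mul_eq hn0 hab.le hu, mul_div_cancel₀ _ hh.ne', ← G_reflect hn hn0 x]
      ring_nf
  · rintro ⟨u, hu, rfl⟩
    exact ⟨a + (b - a) / 2 * u, ⟨by nlinarith [hu.1], by nlinarith [hu.2]⟩,
      G_add_half_mul_eq hn0 hab.le hu.2⟩

theorem image_abs_G_sub_average (hn : Even n) (hn0 : n ≠ 0) (hab : a < b) :
    (fun x => |G a b θ n x - (1 / (b - a)) * ∫ t in a..b, G a b θ n t|) '' Icc a b
      = (fun y => ((b - a) / 2) ^ n / n.factorial * y) ''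
          ((fun u => |peanoProfile θ n u - (1 / (n + 1) - θ)|) '' Icc 0 1) := by
  set K := ((b - a) / 2) ^ n / (n.factorial : ℝ)
  have hK : 0 ≤ K := by
    have : 0 ≤ (b - a) / 2 := by linarith
    positivity
  rw [integral_G hn hn0 hab, show 1 / (b - a) * ((b - a) * (K * (1 / (n + 1) - θ)))
      = K * (1 / (n + 1) - θ) by field_simp [(sub_pos.2 hab).ne'],
    ← image_image (fun y => |y - K * (1 / (n + 1) - θ)|), image_G_Icc hn hn0 hab,
    image_image, image_image]
  refine image_congr fun u _ => ?_
  rw [← mul_sub, abs_mul, abs_of_nonneg hK]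

end G

theorem stmt5 (a b θ : ℝ) (m : ℕ)
    (hab : a < b) (hθ : θ ∈ Set.Icc (0 : ℝ) 1) (hm : 1 ≤ m) :
    (1 ≤ θ * (2 * (m : ℝ) - 1) →
      IsGreatest
        ((fun x => |G a b θ (2 * m) x - (1 / (b - a)) * ∫ t in a..b, G a b θ (2 * m) t|) ''
          Set.Icc a b)
        (max (θ - 1 / (2 * (m : ℝ) + 1))
            (θ * (2 * (m : ℝ) - 1) - 2 * (m : ℝ) / (2 * (m : ℝ) + 1))
          * (b - a) ^ (2 * m) / (((2 * m).factorial : ℝ) * 2 ^ (2 * m)))) ∧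
    (θ * (2 * (m : ℝ) - 1) < 1 →
      IsGreatest
        ((fun x => |G a b θ (2 * m) x - (1 / (b - a)) * ∫ t in a..b, G a b θ (2 * m) t|) ''
          Set.Icc a b)
        (max (max |θ - 1 / (2 * (m : ℝ) + 1)|
              |θ * (2 * (m : ℝ) - 1) - 2 * (m : ℝ) / (2 * (m : ℝ) + 1)|)
            |θ - 1 / (2 * (m : ℝ) + 1) - θ ^ (2 * m) * (2 * (m : ℝ) - 1) ^ (2 * m - 1)|
          * (b - a) ^ (2 * m) / (((2 * m).factorial : ℝ) * 2 ^ (2 * m)))) := by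
  have hK : 0 ≤ ((b - a) / 2) ^ (2 * m) / ((2 * m).factorial : ℝ) := by
    have : 0 ≤ (b - a) / 2 := by linarith
    positivity
  have hscale : ∀ M : ℝ, M * (b - a) ^ (2 * m) / (((2 * m).factorial : ℝ) * 2 ^ (2 * m))
      = ((b - a) / 2) ^ (2 * m) / ((2 * m).factorial : ℝ) * M := fun M => by
    rw [div_pow]; ring
  rw [image_abs_G_sub_average (even_two_mul m) (by omega) hab, hscale, hscale]
  refine ⟨fun h => (monotone_mul_left_of_nonneg hK).map_isGreatest ?_,
    fun h => (monotone_mul_left_of_nonneg hK).map_isGreatest ?_⟩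
  · exact_mod_cast isGreatest_abs_peanoProfile_sub_of_one_le (by omega) (by exact_mod_cast h)
  · exact_mod_cast
      isGreatest_abs_peanoProfile_sub_of_lt_one (by omega) hθ.1 (by exact_mod_cast h)
end

section
/- For every θ ∈ [0,1] and every integer n > 1, if f^{(n-1)} is absolutely continuous on [a,b] and f^{(n)} ∈ L¹[a,b], then |I - F_n| ≤ (b-a)^n/(n!·2^n) · ‖f^{(n)}‖₁ · K, where K = θn - 1 if θn > θ+1, K = θ^n(n-1)^{n-1} if 1 < θn ≤ θ+1, and K = max{1-θn, θ^n(n-1)^{n-1}} if θn ≤ 1, and ‖f^{(n)}‖₁ = ∫_a^b |f^{(n)}(x)| dx. -/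
/-!
On each half of `[a, b]` the kernel `G` is the `n`-th member of a family of polynomials
`P_k = (x - c)^k/k! + d (x - c)^(k-1)/(k-1)!`, with `P_k' = P_(k-1)` and `P_0 = 1`, where `c` is the
endpoint of the half and `d = ∓θ(b-a)/2`. Since every `f^(k)`, `k < n`, is absolutely continuous, we
may integrate by parts `n` times and get `∫ f = F_n + (-1)^n ∫ G f^(n)`: the terms at `a` and `b`
produce the trapezoidal part of `F_n`, and at the midpoint the terms of odd order cancel while those
of even order `2i` produce the correction terms.

Writing `x` as an endpoint plus `t (b-a)/2` with `t ∈ [0,1]` gives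
`|G x| = ((b-a)/2)^n/n! · t^(n-1) |t - θn|`, and `K` bounds this profile: by AM-GM,
`t^(n-1) (θn - t) ≤ θ^n (n-1)^(n-1)`, with equality at `t = θ(n-1)`, which lies in `[0,1]` unless
`θn > θ + 1`; in that case the profile increases on `[0,1]` and its maximum is `θn - 1`.
-/

open MeasureTheory intervalIntegral

open Set

theorem add_one_mul_pow_mul_le (m : ℕ) {t u : ℝ} (ht : 0 ≤ t) (hu : 0 ≤ u) :
    (m + 1) * t ^ m * u ≤ m * t ^ (m + 1) + u ^ (m + 1) := by
  induction m with
  | zero => simp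
  | succ m ih =>
    have hmono : 0 ≤ (t ^ (m + 1) - u ^ (m + 1)) * (t - u) := by
      rcases le_total u t with h | h
      · exact mul_nonneg (sub_nonneg.2 (pow_le_pow_left₀ hu h _)) (sub_nonneg.2 h)
      · exact mul_nonneg_of_nonpos_of_nonpos (sub_nonpos.2 (pow_le_pow_left₀ ht h _))
          (sub_nonpos.2 h)
    push_cast
    linear_combination t * ih + hmono

theorem pow_mul_sub_le (m : ℕ) {θ t : ℝ} (hθ : 0 ≤ θ) (ht : 0 ≤ t) :
    t ^ m * (θ * (m + 1) - t) ≤ θ ^ (m + 1) * m ^ m := by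
  rcases m.eq_zero_or_pos with rfl | hm
  · simpa using ht
  have hm' : (0 : ℝ) < m := by exact_mod_cast hm
  have h := add_one_mul_pow_mul_le m (div_nonneg ht hm'.le) hθ
  rw [div_pow, div_pow, pow_succ (m : ℝ)] at h
  field_simp at h
  linear_combination h

theorem pow_mul_sub_le_of_one_le (m : ℕ) {θ t : ℝ} (hθ : 1 ≤ θ * m) (ht₀ : 0 ≤ t) (ht₁ : t ≤ 1) :
    t ^ m * (θ * (m + 1) - t) ≤ θ * (m + 1) - 1 := by
  have h := add_one_mul_pow_mul_le m ht₀ zero_le_one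
  have hpow : t ^ (m + 1) ≤ 1 := pow_le_one₀ ht₀ ht₁
  rw [one_pow, mul_one] at h
  have hθ₀ : 0 ≤ θ := by nlinarith [(m.cast_nonneg : (0 : ℝ) ≤ m)]
  linear_combination mul_le_mul_of_nonneg_left h hθ₀
    + mul_le_mul_of_nonneg_left hpow (sub_nonneg.2 hθ)

theorem AbsolutelyContinuousOnInterval.congr {X : Type*} [PseudoMetricSpace X] {f g : ℝ → X}
    {a b : ℝ}
    (hf : AbsolutelyContinuousOnInterval f a b) (hfg : EqOn f g (uIcc a b)) :
    AbsolutelyContinuousOnInterval g a b := by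
  refine Filter.Tendsto.congr' ?_ hf
  filter_upwards [Filter.mem_inf_of_right (Filter.mem_principal_self _)] with E hE
  exact Finset.sum_congr rfl fun i hi => by rw [hfg (hE.1 i hi).1, hfg (hE.1 i hi).2]

theorem absolutelyContinuousOnInterval_of_eq_add_integral {f g : ℝ → ℝ} {a b : ℝ}
    (hg : IntervalIntegrable g volume a b)
    (hfg : ∀ x ∈ uIcc a b, f x = f a + ∫ t in a..x, g t) :
    AbsolutelyContinuousOnInterval f a b :=
  ((contDiffOn_const (c := f a)).absolutelyContinuousOnInterval.add
    (hg.absolutelyContinuousOnInterval_intervalIntegral left_mem_uIcc)).congr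
    fun x hx => (hfg x hx).symm

theorem absolutelyContinuousOnInterval_iteratedDeriv {f : ℝ → ℝ} {a b : ℝ} {n : ℕ}
    (hab : a ≤ b)
    (hd : ∀ k < n - 1, ∀ x ∈ Icc a b,
      HasDerivAt (iteratedDeriv k f) (iteratedDeriv (k + 1) f x) x)
    (hint : IntervalIntegrable (iteratedDeriv n f) volume a b)
    (hftc : ∀ x ∈ Icc a b,
      iteratedDeriv (n - 1) f x = iteratedDeriv (n - 1) f a + ∫ t in a..x, iteratedDeriv n f t) :
    ∀ k < n, AbsolutelyContinuousOnInterval (iteratedDeriv k f) a b := by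
  intro k hk
  replace hk : k ≤ n - 1 := by omega
  rw [← uIcc_of_le hab] at hd hftc
  -- downwards: an absolutely continuous `f^(k+1)` is integrable, and `f^(k)` is its primitive
  induction hk using Nat.decreasingInduction with
  | self => exact absolutelyContinuousOnInterval_of_eq_add_integral hint hftc
  | of_succ k hk ih =>
    have hint' : IntervalIntegrable (iteratedDeriv (k + 1) f) volume a b :=
      ih.continuousOn.intervalIntegrable
    refine absolutelyContinuousOnInterval_of_eq_add_integral hint' fun x hx => ?_
    have hsub : uIcc a x ⊆ uIcc a b := uIcc_subset_uIcc_left hx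
    rw [integral_eq_sub_of_hasDerivAt (fun y hy => hd k hk y (hsub hy)) (hint'.mono_set hsub)]
    ring

theorem integral_mul_eq_sum_add_integral_mul_iteratedDeriv {u : ℕ → ℝ → ℝ} {f : ℝ → ℝ}
    {p q : ℝ} {n : ℕ}
    (hu : ∀ k < n, AbsolutelyContinuousOnInterval (u (k + 1)) p q)
    (hu' : ∀ k < n, deriv (u (k + 1)) = u k)
    (hf : ∀ k < n, AbsolutelyContinuousOnInterval (iteratedDeriv k f) p q) :
    ∫ x in p..q, u 0 x * f x
      = ∑ k ∈ Finset.range n, (-1) ^ k *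
          (u (k + 1) q * iteratedDeriv k f q - u (k + 1) p * iteratedDeriv k f p)
        + (-1) ^ n * ∫ x in p..q, u n x * iteratedDeriv n f x := by
  induction n with
  | zero => simp
  | succ n ih =>
    have hibp := (hu n n.lt_succ_self).integral_mul_deriv_eq_deriv_mul (hf n n.lt_succ_self)
    rw [← iteratedDeriv_succ, hu' n n.lt_succ_self] at hibp
    rw [ih (fun k hk => hu k (by omega)) (fun k hk => hu' k (by omega))
      (fun k hk => hf k (by omega)), Finset.sum_range_succ, pow_succ]
    linear_combination (-1) ^ n * hibp

/-- `(x - c)^k/k! + d (x - c)^(k-1)/(k-1)!`, written with the factor `k` so that `k = 0` gives `1`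
in spite of the truncated `k - 1`. -/
noncomputable def peanoPoly (c d : ℝ) (k : ℕ) (x : ℝ) : ℝ :=
  ((x - c) ^ k + k * d * (x - c) ^ (k - 1)) / k.factorial

namespace peanoPoly

variable (c d : ℝ)

@[simp]
theorem zero : peanoPoly c d 0 = fun _ => 1 := by
  funext x
  simp [peanoPoly]

theorem succ_apply (k : ℕ) (x : ℝ) :
    peanoPoly c d (k + 1) x = (x - c) ^ k * (x - c + (k + 1) * d) / (k + 1).factorial := by
  simp only [peanoPoly, Nat.add_sub_cancel]
  push_cast
  ring

theorem succ_apply_self (k : ℕ) : peanoPoly c d (k + 1) c = if k = 0 then d else 0 := by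
  rcases k.eq_zero_or_pos with rfl | hk
  · simp [succ_apply]
  · simp [succ_apply, hk.ne', zero_pow hk.ne']

theorem hasDerivAt (k : ℕ) (x : ℝ) :
    HasDerivAt (peanoPoly c d (k + 1)) (peanoPoly c d k x) x := by
  have hlin := (hasDerivAt_id' x).sub_const c
  have hpoly : peanoPoly c d (k + 1)
      = fun y => ((y - c) ^ (k + 1) + ((k + 1 : ℕ) : ℝ) * d * (y - c) ^ k) / (k + 1).factorial :=
    funext fun y => by simp [peanoPoly]
  rw [hpoly]
  refine (((hlin.fun_pow _).fun_add ((hlin.fun_pow _).const_mul _)).div_const _).congr_deriv ?_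
  simp only [peanoPoly, Nat.factorial_succ, Nat.add_sub_cancel]
  rcases k.eq_zero_or_pos with rfl | hk
  · simp
  · push_cast
    field_simp

theorem deriv (k : ℕ) : deriv (peanoPoly c d (k + 1)) = peanoPoly c d k :=
  funext fun x => (hasDerivAt c d k x).deriv

theorem absolutelyContinuousOnInterval (k : ℕ) (p q : ℝ) :
    AbsolutelyContinuousOnInterval (peanoPoly c d k) p q := by
  refine ContDiffOn.absolutelyContinuousOnInterval (ContDiff.contDiffOn ?_)
  unfold peanoPoly
  fun_prop

theorem succ_apply_add_mul (c e θ t : ℝ) (m : ℕ) :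
    peanoPoly c (-(θ * e)) (m + 1) (c + t * e)
      = e ^ (m + 1) / (m + 1).factorial * (t ^ m * (t - θ * (m + 1))) := by
  rw [succ_apply]
  ring

theorem abs_succ_apply_add_mul_le {c e θ t K : ℝ} {m : ℕ} (ht : t ∈ Icc (0 : ℝ) 1)
    (hK : ∀ t ∈ Icc (0 : ℝ) 1, t ^ m * |t - θ * (m + 1)| ≤ K) :
    |peanoPoly c (-(θ * e)) (m + 1) (c + t * e)| ≤ |e| ^ (m + 1) / (m + 1).factorial * K := by
  rw [succ_apply_add_mul, abs_mul, abs_div, abs_pow, Nat.abs_cast, abs_mul,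
    abs_of_nonneg (pow_nonneg ht.1 _)]
  gcongr
  exact hK t ht

end peanoPoly

section Kernel

variable {a b θ x : ℝ} {m : ℕ}

theorem G_eq_peanoPoly_of_le (hx : x ≤ (a + b) / 2) :
    G a b θ (m + 1) x = peanoPoly a (-(θ * (b - a) / 2)) (m + 1) x := by
  rw [G, if_pos hx, peanoPoly.succ_apply]
  push_cast
  ring

theorem G_eq_peanoPoly_of_lt (hx : (a + b) / 2 < x) :
    G a b θ (m + 1) x = peanoPoly b (θ * (b - a) / 2) (m + 1) x := by
  rw [G, if_neg hx.not_ge, peanoPoly.succ_apply]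
  push_cast
  ring

theorem abs_G_le (hab : a < b) (hx : x ∈ Icc a b) {K : ℝ}
    (hK : ∀ t ∈ Icc (0 : ℝ) 1, t ^ m * |t - θ * (m + 1)| ≤ K) :
    |G a b θ (m + 1) x| ≤ (b - a) ^ (m + 1) / ((m + 1).factorial * 2 ^ (m + 1)) * K := by
  have hh : 0 < (b - a) / 2 := by linarith
  have hscale : (b - a) ^ (m + 1) / ((m + 1).factorial * 2 ^ (m + 1))
      = |(b - a) / 2| ^ (m + 1) / (m + 1).factorial := by
    rw [abs_of_pos hh, div_pow]; ring
  rw [hscale]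
  rcases le_or_gt x ((a + b) / 2) with hxm | hxm
  · have ht : (x - a) / ((b - a) / 2) ∈ Icc (0 : ℝ) 1 :=
      ⟨div_nonneg (by linarith [hx.1]) hh.le, (div_le_one hh).2 (by linarith)⟩
    have h := peanoPoly.abs_succ_apply_add_mul_le (c := a) (e := (b - a) / 2) ht hK
    rwa [div_mul_cancel₀ _ hh.ne', add_sub_cancel, ← mul_div_assoc,
      ← G_eq_peanoPoly_of_le hxm] at h
  · have ht : (b - x) / ((b - a) / 2) ∈ Icc (0 : ℝ) 1 :=
      ⟨div_nonneg (by linarith [hx.2]) hh.le, (div_le_one hh).2 (by linarith)⟩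
    have h := peanoPoly.abs_succ_apply_add_mul_le (c := b) (e := -((b - a) / 2)) ht hK
    simp only [mul_neg, neg_neg] at h
    rwa [div_mul_cancel₀ _ hh.ne', ← sub_eq_add_neg, sub_sub_cancel,
      ← mul_div_assoc, abs_neg, ← G_eq_peanoPoly_of_lt hxm] at h

end Kernel

theorem Finset.sum_range_one_add_neg_one_pow_mul {R : Type*} [Ring R] (F : ℕ → R) (n : ℕ) :
    ∑ k ∈ Finset.range n, (1 + (-1) ^ k) * F k
      = 2 * ∑ i ∈ Finset.range ((n + 1) / 2), F (2 * i) := by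
  induction n with
  | zero => simp
  | succ n ih =>
    rw [Finset.sum_range_succ, ih]
    rcases n.even_or_odd with ⟨j, rfl⟩ | ⟨j, rfl⟩
    · rw [show (j + j + 1 + 1) / 2 = j + 1 by omega, show (j + j + 1) / 2 = j by omega,
        Finset.sum_range_succ, Even.neg_one_pow ⟨j, rfl⟩, ← two_mul]
      noncomm_ring
    · rw [show (2 * j + 1 + 1 + 1) / 2 = (2 * j + 1 + 1) / 2 by omega,
        Odd.neg_one_pow ⟨j, rfl⟩]
      simp

theorem quadF_eq_add_sum_range (a b θ : ℝ) (m : ℕ) (f : ℝ → ℝ) :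
    quadF a b θ (m + 1) f = (b - a) * θ * (f a + f b) / 2
      + ∑ i ∈ Finset.range ((m + 1 + 1) / 2),
          (1 - θ * (2 * (i : ℝ) + 1)) * (b - a) ^ (2 * i + 1)
            / (((2 * i + 1).factorial : ℝ) * 2 ^ (2 * i))
            * iteratedDeriv (2 * i) f ((a + b) / 2) := by
  rw [show (m + 1 + 1) / 2 = (m + 1 - 1) / 2 + 1 by omega, Finset.sum_range_eq_add_Ico _ (by omega),
    Finset.Ico_add_one_right_eq_Icc, quadF]
  simp only [add_tsub_cancel_right, CharP.cast_eq_zero, mul_zero, zero_add, mul_one, pow_one,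
    Nat.factorial_one, Nat.cast_one, pow_zero, div_one, iteratedDeriv_zero]
  ring

theorem sum_boundary_terms_eq_quadF (a b θ : ℝ) (m : ℕ) (f : ℝ → ℝ) :
    (∑ k ∈ Finset.range (m + 1), (-1) ^ k *
        (peanoPoly a (-(θ * (b - a) / 2)) (k + 1) ((a + b) / 2) * iteratedDeriv k f ((a + b) / 2)
          - peanoPoly a (-(θ * (b - a) / 2)) (k + 1) a * iteratedDeriv k f a))
      + ∑ k ∈ Finset.range (m + 1), (-1) ^ k *
        (peanoPoly b (θ * (b - a) / 2) (k + 1) b * iteratedDeriv k f b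
          - peanoPoly b (θ * (b - a) / 2) (k + 1) ((a + b) / 2) * iteratedDeriv k f ((a + b) / 2))
      = quadF a b θ (m + 1) f := by
  set L := peanoPoly a (-(θ * (b - a) / 2))
  set R := peanoPoly b (θ * (b - a) / 2)
  set c := (a + b) / 2
  set w : ℕ → ℝ := fun k => ((b - a) / 2) ^ (k + 1) * (1 - (k + 1) * θ) / (k + 1).factorial
  have hL : ∀ k, L (k + 1) c = w k := fun k => by
    simp only [L, c, w, peanoPoly.succ_apply]
    ring
  have hR : ∀ k, R (k + 1) c = -(-1) ^ k * w k := fun k => by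
    simp only [R, c, w, peanoPoly.succ_apply]
    rw [show (a + b) / 2 - b = -((b - a) / 2) by ring, neg_pow]
    ring
  have hw : ∀ i : ℕ, 2 * (w (2 * i) * iteratedDeriv (2 * i) f c)
      = (1 - θ * (2 * (i : ℝ) + 1)) * (b - a) ^ (2 * i + 1)
          / (((2 * i + 1).factorial : ℝ) * 2 ^ (2 * i)) * iteratedDeriv (2 * i) f c := fun i => by
    simp only [w]
    rw [div_pow, pow_succ (2 : ℝ) (2 * i)]
    push_cast
    field_simp
  have hterm : ∀ k ∈ Finset.range (m + 1),
      (-1) ^ k * (L (k + 1) c * iteratedDeriv k f c - L (k + 1) a * iteratedDeriv k f a)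
        + (-1) ^ k * (R (k + 1) b * iteratedDeriv k f b - R (k + 1) c * iteratedDeriv k f c)
      = (1 + (-1) ^ k) * (w k * iteratedDeriv k f c)
        + (-1) ^ k * (R (k + 1) b * iteratedDeriv k f b - L (k + 1) a * iteratedDeriv k f a) :=
    fun k _ => by
      have hsq : ((-1 : ℝ) ^ k) * (-1) ^ k = 1 := by rw [← pow_add]; exact Even.neg_one_pow ⟨k, rfl⟩
      rw [hL, hR]
      linear_combination (w k * iteratedDeriv k f c) * hsq
  rw [← Finset.sum_add_distrib, Finset.sum_congr rfl hterm, Finset.sum_add_distrib,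
    Finset.sum_range_one_add_neg_one_pow_mul, Finset.mul_sum, Finset.sum_congr rfl fun i _ => hw i,
    Finset.sum_range_succ', quadF_eq_add_sum_range]
  simp only [L, R, peanoPoly.succ_apply_self, Nat.add_eq_zero_iff, one_ne_zero, and_false,
    ↓reduceIte, zero_mul, sub_self, mul_zero, Finset.sum_const_zero, pow_zero, iteratedDeriv_zero,
    neg_mul, sub_neg_eq_add, one_mul, zero_add]
  ring

section Estimate

variable {a b θ : ℝ} {m : ℕ} {f : ℝ → ℝ}

theorem AbsolutelyContinuousOnInterval.intervalIntegrable_iteratedDeriv_succ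
    (hf : AbsolutelyContinuousOnInterval (iteratedDeriv m f) a b) :
    IntervalIntegrable (iteratedDeriv (m + 1) f) volume a b := by
  rw [iteratedDeriv_succ]
  exact hf.intervalIntegrable_deriv

theorem integral_G_mul_eq_add (hab : a ≤ b) {g : ℝ → ℝ} (hg : IntervalIntegrable g volume a b) :
    ∫ x in a..b, G a b θ (m + 1) x * g x
      = (∫ x in a..(a + b) / 2, peanoPoly a (-(θ * (b - a) / 2)) (m + 1) x * g x)
        + ∫ x in (a + b) / 2..b, peanoPoly b (θ * (b - a) / 2) (m + 1) x * g x := by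
  have hac : a ≤ (a + b) / 2 := by linarith
  have hcb : (a + b) / 2 ≤ b := by linarith
  have hL : EqOn (fun x => peanoPoly a (-(θ * (b - a) / 2)) (m + 1) x * g x)
      (fun x => G a b θ (m + 1) x * g x) (uIoo a ((a + b) / 2)) := fun x hx => by
    rw [uIoo_of_le hac] at hx
    simp only [G_eq_peanoPoly_of_le hx.2.le]
  have hR : EqOn (fun x => peanoPoly b (θ * (b - a) / 2) (m + 1) x * g x)
      (fun x => G a b θ (m + 1) x * g x) (uIoo ((a + b) / 2) b) := fun x hx => by
    rw [uIoo_of_le hcb] at hx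
    simp only [G_eq_peanoPoly_of_lt hx.1]
  have hmid : (a + b) / 2 ∈ uIcc a b := mem_uIcc_of_le hac hcb
  rw [← integral_add_adjacent_intervals
      (((hg.mono_set (uIcc_subset_uIcc_left hmid)).continuousOn_mul
        (peanoPoly.absolutelyContinuousOnInterval _ _ _ _ _).continuousOn).congr_uIoo hL)
      (((hg.mono_set (uIcc_subset_uIcc_right hmid)).continuousOn_mul
        (peanoPoly.absolutelyContinuousOnInterval _ _ _ _ _).continuousOn).congr_uIoo hR),
    integral_congr_uIoo hL, integral_congr_uIoo hR]

theorem integral_eq_quadF_add_integral_G (hab : a ≤ b)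
    (hf : ∀ k < m + 1, AbsolutelyContinuousOnInterval (iteratedDeriv k f) a b) :
    ∫ x in a..b, f x = quadF a b θ (m + 1) f
      + (-1) ^ (m + 1) * ∫ x in a..b, G a b θ (m + 1) x * iteratedDeriv (m + 1) f x := by
  have hmid : (a + b) / 2 ∈ uIcc a b := mem_uIcc_of_le (by linarith) (by linarith)
  have hexpand (c d p q : ℝ) (hpq : uIcc p q ⊆ uIcc a b) :=
    integral_mul_eq_sum_add_integral_mul_iteratedDeriv (u := peanoPoly c d) (p := p) (q := q)
      (fun k _ => peanoPoly.absolutelyContinuousOnInterval c d _ p q)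
      (fun k _ => peanoPoly.deriv c d k) (fun k hk => (hf k hk).mono hpq)
  have hL := hexpand a (-(θ * (b - a) / 2)) a ((a + b) / 2) (uIcc_subset_uIcc_left hmid)
  have hR := hexpand b (θ * (b - a) / 2) ((a + b) / 2) b (uIcc_subset_uIcc_right hmid)
  simp only [peanoPoly.zero, one_mul] at hL hR
  have hfint : IntervalIntegrable f volume a b := by
    simpa using (hf 0 m.succ_pos).continuousOn.intervalIntegrable
  rw [← integral_add_adjacent_intervals (hfint.mono_set (uIcc_subset_uIcc_left hmid))
      (hfint.mono_set (uIcc_subset_uIcc_right hmid)),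
    integral_G_mul_eq_add hab (hf m m.lt_succ_self).intervalIntegrable_iteratedDeriv_succ, hL, hR]
  linear_combination sum_boundary_terms_eq_quadF a b θ m f

theorem abs_integral_sub_quadF_le (hab : a < b)
    (hf : ∀ k < m + 1, AbsolutelyContinuousOnInterval (iteratedDeriv k f) a b) {K : ℝ}
    (hK : ∀ t ∈ Icc (0 : ℝ) 1, t ^ m * |t - θ * (m + 1)| ≤ K) :
    |(∫ x in a..b, f x) - quadF a b θ (m + 1) f|
      ≤ (b - a) ^ (m + 1) / ((m + 1).factorial * 2 ^ (m + 1))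
        * (∫ x in a..b, |iteratedDeriv (m + 1) f x|) * K := by
  have hint := (hf m m.lt_succ_self).intervalIntegrable_iteratedDeriv_succ
  rw [integral_eq_quadF_add_integral_G hab.le hf, add_sub_cancel_left, abs_mul, abs_pow, abs_neg,
    abs_one, one_pow, one_mul, ← Real.norm_eq_abs]
  calc ‖∫ x in a..b, G a b θ (m + 1) x * iteratedDeriv (m + 1) f x‖
      ≤ ∫ x in a..b, (b - a) ^ (m + 1) / ((m + 1).factorial * 2 ^ (m + 1)) * K
          * |iteratedDeriv (m + 1) f x| := by
        refine norm_integral_le_of_norm_le hab.le (ae_of_all _ fun x hx => ?_)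
          (hint.abs.const_mul _)
        rw [Real.norm_eq_abs, abs_mul]
        exact mul_le_mul_of_nonneg_right (abs_G_le hab (Ioc_subset_Icc_self hx) hK)
          (abs_nonneg _)
    _ = _ := by rw [intervalIntegral.integral_const_mul]; ring

end Estimate

theorem stmt6_general (a b θ : ℝ) (n : ℕ) (f : ℝ → ℝ)
    (hab : a < b) (hθ : θ ∈ Set.Icc (0 : ℝ) 1) (hn : 1 < n)
    (hd : ∀ k < n - 1, ∀ x ∈ Set.Icc a b,
      HasDerivAt (iteratedDeriv k f) (iteratedDeriv (k + 1) f x) x)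
    (hint : IntervalIntegrable (iteratedDeriv n f) volume a b)
    (hftc : ∀ x ∈ Set.Icc a b,
      iteratedDeriv (n - 1) f x
        = iteratedDeriv (n - 1) f a + ∫ t in a..x, iteratedDeriv n f t)
    :
    (θ * (n : ℝ) > θ + 1 →
      |(∫ x in a..b, f x) - quadF a b θ n f|
        ≤ (b - a) ^ n / ((n.factorial : ℝ) * 2 ^ n)
          * (∫ x in a..b, |iteratedDeriv n f x|) * (θ * (n : ℝ) - 1)) ∧
    (1 < θ * (n : ℝ) ∧ θ * (n : ℝ) ≤ θ + 1 →
      |(∫ x in a..b, f x) - quadF a b θ n f|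
        ≤ (b - a) ^ n / ((n.factorial : ℝ) * 2 ^ n)
          * (∫ x in a..b, |iteratedDeriv n f x|) * (θ ^ n * ((n : ℝ) - 1) ^ (n - 1))) ∧
    (θ * (n : ℝ) ≤ 1 →
      |(∫ x in a..b, f x) - quadF a b θ n f|
        ≤ (b - a) ^ n / ((n.factorial : ℝ) * 2 ^ n)
          * (∫ x in a..b, |iteratedDeriv n f x|)
          * max (1 - θ * (n : ℝ)) (θ ^ n * ((n : ℝ) - 1) ^ (n - 1))) := by
  have hf := absolutelyContinuousOnInterval_iteratedDeriv hab.le hd hint hftc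
  obtain ⟨m, rfl⟩ : ∃ m, n = m + 1 := ⟨n - 1, by omega⟩
  have hbound {K : ℝ} (hK : ∀ t ∈ Set.Icc (0 : ℝ) 1, t ^ m * |t - θ * (m + 1)| ≤ K) :=
    abs_integral_sub_quadF_le hab hf hK
  have habs {t : ℝ} (ht : t ≤ θ * (m + 1)) : |t - θ * (m + 1)| = θ * (m + 1) - t := by
    rw [abs_sub_comm, abs_of_nonneg (by linarith)]
  push_cast
  simp only [add_sub_cancel_right]
  refine ⟨fun h => hbound fun t ht => ?_, fun h => hbound fun t ht => ?_,
    fun h => hbound fun t ht => ?_⟩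
  · rw [habs (by linarith [ht.2, hθ.1])]
    exact pow_mul_sub_le_of_one_le m (by linarith) ht.1 ht.2
  · rw [habs (by linarith [ht.2])]
    exact pow_mul_sub_le m hθ.1 ht.1
  · rcases le_total t (θ * (m + 1)) with hle | hge
    · rw [habs hle]
      exact (pow_mul_sub_le m hθ.1 ht.1).trans (le_max_right _ _)
    · rw [abs_of_nonneg (sub_nonneg.2 hge)]
      calc t ^ m * (t - θ * (m + 1)) ≤ t - θ * (m + 1) :=
            mul_le_of_le_one_left (sub_nonneg.2 hge) (pow_le_one₀ ht.1 ht.2)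
        _ ≤ _ := by linarith [ht.2, le_max_left (1 - θ * (m + 1)) (θ ^ (m + 1) * m ^ m)]

theorem stmt6 (a b θ : ℝ) (n : ℕ) (f : ℝ → ℝ)
    (hab : a < b) (hθ : θ ∈ Set.Icc (0 : ℝ) 1) (hn : 1 < n)
    (hd : ∀ k < n - 1, ∀ x ∈ Set.Icc a b,
      HasDerivAt (iteratedDeriv k f) (iteratedDeriv (k + 1) f x) x)
    (hcont : ContinuousOn (iteratedDeriv (n - 1) f) (Set.Icc a b))
    (hint : IntervalIntegrable (iteratedDeriv n f) volume a b)
    (hftc : ∀ x ∈ Set.Icc a b,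
      iteratedDeriv (n - 1) f x
        = iteratedDeriv (n - 1) f a + ∫ t in a..x, iteratedDeriv n f t)
    :
    (θ * (n : ℝ) > θ + 1 →
      |(∫ x in a..b, f x) - quadF a b θ n f|
        ≤ (b - a) ^ n / ((n.factorial : ℝ) * 2 ^ n)
          * (∫ x in a..b, |iteratedDeriv n f x|) * (θ * (n : ℝ) - 1)) ∧
    (1 < θ * (n : ℝ) ∧ θ * (n : ℝ) ≤ θ + 1 →
      |(∫ x in a..b, f x) - quadF a b θ n f|
        ≤ (b - a) ^ n / ((n.factorial : ℝ) * 2 ^ n)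
          * (∫ x in a..b, |iteratedDeriv n f x|) * (θ ^ n * ((n : ℝ) - 1) ^ (n - 1))) ∧
    (θ * (n : ℝ) ≤ 1 →
      |(∫ x in a..b, f x) - quadF a b θ n f|
        ≤ (b - a) ^ n / ((n.factorial : ℝ) * 2 ^ n)
          * (∫ x in a..b, |iteratedDeriv n f x|)
          * max (1 - θ * (n : ℝ)) (θ ^ n * ((n : ℝ) - 1) ^ (n - 1))) :=
  stmt6_general a b θ n f hab hθ hn hd hint hftc
end

section
/- For every θ ∈ [0,1] and every integer n ≥ 1, if f : [a,b] → ℝ is n-times continuously differentiable with ‖f^{(n)}‖_∞ = sup_{x∈(a,b)} |f^{(n)}(x)| < ∞, then |I - F_n| ≤ (b-a)^{n+1}/((n+1)!·2^n) · ‖f^{(n)}‖_∞ · K, where K = θ(n+1) - 1 if θn ≥ 1, and K = 2θ^{n+1}n^n - θ(n+1) + 1 if 0 ≤ θn < 1. -/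
open MeasureTheory intervalIntegral

/-!
Peano kernel argument. Integrating by parts `n` times on each half of `[a, b]` against the
piecewise polynomial kernel `G_n` gives `I - F_n = (-1)^n ∫ G_n f^(n)`: the boundary terms
vanish at `a` and `b`, and the jumps of the kernel at the midpoint are exactly the derivative
terms of `F_n` (they vanish in odd order). Hence `|I - F_n| ≤ ‖f^(n)‖_∞ ∫ |G_n|`, and by the
symmetry of `G_n` about the midpoint `∫ |G_n| = 2 ∫_a^{(a+b)/2} |G_n|`. On `[a, (a+b)/2]` the kernel changes
sign only at `a + θ n (b - a) / 2`, which lies beyond the midpoint iff `θ n ≥ 1`; since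
`G_{n+1}` is an antiderivative of `G_n` vanishing at `a`, both cases integrate in closed form.
-/

open Set
open scoped Nat

theorem abs_integral_mul_le_mul_integral_abs {K g : ℝ → ℝ} {u v M : ℝ} (huv : u ≤ v)
    (hK : IntervalIntegrable K volume u v) (hg : ∀ x ∈ Ioo u v, |g x| ≤ M) :
    |∫ x in u..v, K x * g x| ≤ M * ∫ x in u..v, |K x| := by
  rw [← intervalIntegral.integral_const_mul, ← Real.norm_eq_abs]
  refine norm_integral_le_of_norm_le huv ?_ (hK.abs.const_mul M)
  filter_upwards [Measure.ae_ne volume v] with x hxv hx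
  rw [Real.norm_eq_abs, abs_mul, mul_comm]
  exact mul_le_mul_of_nonneg_right (hg x ⟨hx.1, hx.2.lt_of_ne hxv⟩) (abs_nonneg _)

-- The paper's kernel `G a b θ n` is `peanoKernel a (θ * (b - a) / 2) n` on `[a, (a + b) / 2]`
-- and `peanoKernel b (-(θ * (b - a) / 2)) n` to the right of the midpoint.
noncomputable def peanoKernel (c d : ℝ) (k : ℕ) (x : ℝ) : ℝ :=
  (x - c) ^ (k - 1) / k ! * (x - c - k * d)

section PeanoKernel

variable (c d : ℝ)

theorem continuous_peanoKernel (k : ℕ) : Continuous (peanoKernel c d k) := by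
  unfold peanoKernel; fun_prop

theorem peanoKernel_succ_eq (k : ℕ) (x : ℝ) :
    peanoKernel c d (k + 1) x = (x - c) ^ (k + 1) / (k + 1)! - d * ((x - c) ^ k / k !) := by
  rw [peanoKernel, Nat.add_sub_cancel, Nat.factorial_succ]
  push_cast
  field_simp
  ring

theorem peanoKernel_self {k : ℕ} (hk : k ≠ 1) : peanoKernel c d k c = 0 := by
  rcases k with _ | _ | k <;> simp_all [peanoKernel]

theorem peanoKernel_reflect (c' : ℝ) {k : ℕ} (hk : k ≠ 0) (x : ℝ) :
    peanoKernel c' (-d) k (c + c' - x) = (-1) ^ k * peanoKernel c d k x := by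
  obtain ⟨j, rfl⟩ := Nat.exists_eq_add_one_of_ne_zero hk
  simp only [peanoKernel, Nat.add_sub_cancel, show c + c' - x - c' = -(x - c) by ring,
    neg_pow (x - c)]
  ring

theorem hasDerivAt_pow_div_factorial (k : ℕ) (x : ℝ) :
    HasDerivAt (fun x => (x - c) ^ (k + 1) / (k + 1)!) ((x - c) ^ k / k !) x := by
  refine ((((hasDerivAt_id x).sub_const c).pow (k + 1)).div_const ((k + 1)! : ℝ)).congr_deriv ?_
  rw [Nat.factorial_succ]
  push_cast
  field_simp
  simp

theorem peanoKernel_one : peanoKernel c d 1 = fun x => x - c - d := by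
  ext; simp [peanoKernel]

theorem hasDerivAt_peanoKernel_one (x : ℝ) : HasDerivAt (peanoKernel c d 1) 1 x := by
  simpa [peanoKernel_one] using ((hasDerivAt_id x).sub_const c).sub_const d

theorem hasDerivAt_peanoKernel {k : ℕ} (hk : k ≠ 0) (x : ℝ) :
    HasDerivAt (peanoKernel c d (k + 1)) (peanoKernel c d k x) x := by
  obtain ⟨j, rfl⟩ := Nat.exists_eq_add_one_of_ne_zero hk
  have h := (hasDerivAt_pow_div_factorial c (j + 1) x).sub
    ((hasDerivAt_pow_div_factorial c j x).const_mul d)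
  rw [peanoKernel_succ_eq]
  exact h.congr_of_eventuallyEq (.of_forall (peanoKernel_succ_eq c d (j + 1)))

theorem integral_peanoKernel (k : ℕ) (u v : ℝ) :
    ∫ x in u..v, peanoKernel c d (k + 1) x
      = peanoKernel c d (k + 2) v - peanoKernel c d (k + 2) u :=
  integral_eq_sub_of_hasDerivAt (fun x _ => hasDerivAt_peanoKernel c d k.succ_ne_zero x)
    ((continuous_peanoKernel c d _).intervalIntegrable u v)

theorem integral_abs_peanoKernel_reflect (c' : ℝ) {k : ℕ} (hk : k ≠ 0) (u v : ℝ) :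
    ∫ x in u..v, |peanoKernel c' (-d) k x|
      = ∫ x in c + c' - v..c + c' - u, |peanoKernel c d k x| := by
  have h : ∀ x, |peanoKernel c' (-d) k x| = |peanoKernel c d k (c + c' - x)| := fun x => by
    conv_lhs => rw [← sub_sub_cancel (c + c') x]
    rw [peanoKernel_reflect c d c' hk, abs_mul, abs_pow, abs_neg, abs_one, one_pow, one_mul]
  simp_rw [h]
  exact intervalIntegral.integral_comp_sub_left (fun x => |peanoKernel c d k x|) (c + c')

variable {c d} {n : ℕ} {v : ℝ}

theorem integral_abs_peanoKernel_of_le (hn : n ≠ 0) (hcv : c ≤ v) (hv : v ≤ c + n * d) :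
    ∫ x in c..v, |peanoKernel c d n x| = -peanoKernel c d (n + 1) v := by
  obtain ⟨k, rfl⟩ := Nat.exists_eq_add_one_of_ne_zero hn
  have hneg : EqOn (fun x => |peanoKernel c d (k + 1) x|) (fun x => -peanoKernel c d (k + 1) x)
      (uIcc c v) := by
    intro x hx
    rw [uIcc_of_le hcv] at hx
    refine abs_of_nonpos (mul_nonpos_of_nonneg_of_nonpos ?_ ?_)
    · exact div_nonneg (pow_nonneg (sub_nonneg.2 hx.1) _) (by positivity)
    · linarith [hx.2]
  rw [integral_congr hneg, intervalIntegral.integral_neg, integral_peanoKernel,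
    peanoKernel_self c d (by omega)]
  simp

theorem integral_abs_peanoKernel_of_ge (hn : n ≠ 0) (hd : 0 ≤ d) (hv : c + n * d ≤ v) :
    ∫ x in c..v, |peanoKernel c d n x|
      = peanoKernel c d (n + 1) v - 2 * peanoKernel c d (n + 1) (c + n * d) := by
  obtain ⟨k, rfl⟩ := Nat.exists_eq_add_one_of_ne_zero hn
  set t := c + (k + 1 : ℕ) * d
  have hct : c ≤ t := le_add_of_nonneg_right (by positivity)
  have hpos : EqOn (fun x => |peanoKernel c d (k + 1) x|) (peanoKernel c d (k + 1)) (uIcc t v) := by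
    intro x hx
    rw [uIcc_of_le hv] at hx
    refine abs_of_nonneg (mul_nonneg ?_ ?_)
    · exact div_nonneg (pow_nonneg (by linarith [hx.1]) _) (by positivity)
    · linarith [hx.1]
  have habs := (continuous_peanoKernel c d (k + 1)).abs
  rw [← integral_add_adjacent_intervals (habs.intervalIntegrable c t) (habs.intervalIntegrable t v),
    integral_abs_peanoKernel_of_le hn hct le_rfl, integral_congr hpos, integral_peanoKernel]
  ring

end PeanoKernel

theorem quadF_one (a b θ : ℝ) (f : ℝ → ℝ) :
    quadF a b θ 1 f = (b - a) * ((1 - θ) * f ((a + b) / 2) + θ * (f a + f b) / 2) := by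
  simp [quadF]

theorem quadF_succ_sub_quadF (a b θ : ℝ) (f : ℝ → ℝ) {n : ℕ} (hn : n ≠ 0) :
    quadF a b θ (n + 1) f - quadF a b θ n f
      = (1 + (-1) ^ n) * peanoKernel a (θ * (b - a) / 2) (n + 1) ((a + b) / 2)
        * iteratedDeriv n f ((a + b) / 2) := by
  rcases Nat.even_or_odd' n with ⟨i, rfl | rfl⟩
  · obtain ⟨j, rfl⟩ := Nat.exists_eq_add_one_of_ne_zero (by omega : i ≠ 0)
    rw [quadF, quadF, show (2 * (j + 1) + 1 - 1) / 2 = j + 1 by omega,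
      show (2 * (j + 1) - 1) / 2 = j by omega, Finset.sum_Icc_succ_top (by omega),
      (even_two_mul _).neg_one_pow, peanoKernel, Nat.add_sub_cancel,
      show (a + b) / 2 - a = (b - a) / 2 by ring, add_sub_add_left_eq_sub, add_sub_cancel_left,
      div_pow]
    push_cast
    field_simp
    ring
  · rw [quadF, quadF, show (2 * i + 1 + 1 - 1) / 2 = (2 * i + 1 - 1) / 2 by omega,
      (odd_two_mul_add_one _).neg_one_pow]
    ring

theorem integral_sub_quadF_eq_peanoKernel {a b θ : ℝ} {f : ℝ → ℝ} {n : ℕ} (hn : 1 ≤ n) (hab : a ≤ b)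
    (hd : ∀ k < n, ∀ x ∈ Icc a b, HasDerivAt (iteratedDeriv k f) (iteratedDeriv (k + 1) f x) x)
    (hint : IntervalIntegrable (iteratedDeriv n f) volume a b) :
    (∫ x in a..b, f x) - quadF a b θ n f = (-1) ^ n *
      ((∫ x in a..(a + b) / 2, peanoKernel a (θ * (b - a) / 2) n x * iteratedDeriv n f x)
        + ∫ x in (a + b) / 2..b, peanoKernel b (-(θ * (b - a) / 2)) n x * iteratedDeriv n f x) := by
  have ham : a ≤ (a + b) / 2 := by linarith
  have hmb : (a + b) / 2 ≤ b := by linarith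
  set m := (a + b) / 2
  set d := θ * (b - a) / 2
  have hIam : uIcc a m ⊆ Icc a b := by rw [uIcc_of_le ham]; exact Icc_subset_Icc_right hmb
  have hImb : uIcc m b ⊆ Icc a b := by rw [uIcc_of_le hmb]; exact Icc_subset_Icc_left ham
  have hIab : Icc a b = uIcc a b := (uIcc_of_le hab).symm
  induction n, hn using Nat.le_induction with
  | base =>
    have hf : IntervalIntegrable f volume a b :=
      ContinuousOn.intervalIntegrable_of_Icc hab fun x hx =>
        (hd 0 one_pos x hx).continuousAt.continuousWithinAt
    have hA := integral_mul_deriv_eq_deriv_mul (fun x _ => hasDerivAt_peanoKernel_one a d x)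
      (fun x hx => hd 0 one_pos x (hIam hx)) intervalIntegrable_const
      (hint.mono_set (hIab ▸ hIam))
    have hB := integral_mul_deriv_eq_deriv_mul (fun x _ => hasDerivAt_peanoKernel_one b (-d) x)
      (fun x hx => hd 0 one_pos x (hImb hx)) intervalIntegrable_const
      (hint.mono_set (hIab ▸ hImb))
    rw [hA, hB, ← integral_add_adjacent_intervals (hf.mono_set (hIab ▸ hIam))
      (hf.mono_set (hIab ▸ hImb))]
    simp only [quadF_one, peanoKernel_one, iteratedDeriv_zero, one_mul]
    ring
  | succ n hn ih =>
    have hn0 : n ≠ 0 := by omega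
    have hcont : ContinuousOn (iteratedDeriv n f) (Icc a b) := fun x hx =>
      (hd n n.lt_succ_self x hx).continuousAt.continuousWithinAt
    have hA := integral_mul_deriv_eq_deriv_mul (fun x _ => hasDerivAt_peanoKernel a d hn0 x)
      (fun x hx => hd n n.lt_succ_self x (hIam hx))
      ((continuous_peanoKernel a d n).intervalIntegrable _ _) (hint.mono_set (hIab ▸ hIam))
    have hB := integral_mul_deriv_eq_deriv_mul (fun x _ => hasDerivAt_peanoKernel b (-d) hn0 x)
      (fun x hx => hd n n.lt_succ_self x (hImb hx))
      ((continuous_peanoKernel b (-d) n).intervalIntegrable _ _) (hint.mono_set (hIab ▸ hImb))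
    have hQm : peanoKernel b (-d) (n + 1) m = (-1) ^ (n + 1) * peanoKernel a d (n + 1) m := by
      rw [← peanoKernel_reflect a d b n.succ_ne_zero m]
      congr 1
      ring
    have hsq : ((-1 : ℝ) ^ n) ^ 2 = 1 := by rw [← pow_mul, mul_comm, pow_mul]; norm_num
    -- the boundary terms vanish at `a` and `b`; the jump at the midpoint is the new term of `quadF`
    rw [hA, hB, hQm, peanoKernel_self a d (by omega), peanoKernel_self b (-d) (by omega)]
    linear_combination ih (fun k hk => hd k (by omega)) (hcont.intervalIntegrable_of_Icc hab)
      - quadF_succ_sub_quadF a b θ f hn0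
      + peanoKernel a d (n + 1) m * iteratedDeriv n f m * hsq

theorem abs_integral_sub_quadF_le_s8 {a b θ M : ℝ} {f : ℝ → ℝ} {n : ℕ} (hn : 1 ≤ n) (hab : a ≤ b)
    (hd : ∀ k < n, ∀ x ∈ Icc a b, HasDerivAt (iteratedDeriv k f) (iteratedDeriv (k + 1) f x) x)
    (hint : IntervalIntegrable (iteratedDeriv n f) volume a b)
    (hM : ∀ x ∈ Ioo a b, |iteratedDeriv n f x| ≤ M) :
    |(∫ x in a..b, f x) - quadF a b θ n f|
      ≤ 2 * M * ∫ x in a..(a + b) / 2, |peanoKernel a (θ * (b - a) / 2) n x| := by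
  have ham : a ≤ (a + b) / 2 := by linarith
  have hmb : (a + b) / 2 ≤ b := by linarith
  have hA := abs_integral_mul_le_mul_integral_abs ham
    ((continuous_peanoKernel a (θ * (b - a) / 2) n).intervalIntegrable _ _)
    fun x hx => hM x ⟨hx.1, hx.2.trans_le hmb⟩
  have hB := abs_integral_mul_le_mul_integral_abs hmb
    ((continuous_peanoKernel b (-(θ * (b - a) / 2)) n).intervalIntegrable _ _)
    fun x hx => hM x ⟨ham.trans_lt hx.1, hx.2⟩
  rw [integral_abs_peanoKernel_reflect a _ b (by omega), show a + b - b = a by ring,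
    show a + b - (a + b) / 2 = (a + b) / 2 by ring] at hB
  rw [integral_sub_quadF_eq_peanoKernel hn hab hd hint, abs_mul, abs_pow, abs_neg, abs_one, one_pow,
    one_mul]
  exact (abs_add_le _ _).trans (by linarith)

theorem stmt8 (a b θ : ℝ) (n : ℕ) (f : ℝ → ℝ) (M : ℝ)
    (hab : a < b) (hθ : θ ∈ Set.Icc (0 : ℝ) 1) (hn : 1 ≤ n)
    (hd : ∀ k < n, ∀ x ∈ Set.Icc a b,
      HasDerivAt (iteratedDeriv k f) (iteratedDeriv (k + 1) f x) x)
    (hcont : ContinuousOn (iteratedDeriv n f) (Set.Icc a b))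
    (hM : ∀ x ∈ Set.Ioo a b, |iteratedDeriv n f x| ≤ M) :
    (1 ≤ θ * (n : ℝ) →
      |(∫ x in a..b, f x) - quadF a b θ n f|
        ≤ (b - a) ^ (n + 1) / (((n + 1).factorial : ℝ) * 2 ^ n) * M
          * (θ * ((n : ℝ) + 1) - 1)) ∧
    (θ * (n : ℝ) < 1 →
      |(∫ x in a..b, f x) - quadF a b θ n f|
        ≤ (b - a) ^ (n + 1) / (((n + 1).factorial : ℝ) * 2 ^ n) * M
          * (2 * θ ^ (n + 1) * (n : ℝ) ^ n - θ * ((n : ℝ) + 1) + 1)) := by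
  have hest := abs_integral_sub_quadF_le_s8 (θ := θ) hn hab.le hd
    (hcont.intervalIntegrable_of_Icc hab.le) hM
  rw [show (a + b) / 2 = a + (b - a) / 2 by ring] at hest
  have hn0 : n ≠ 0 := by omega
  have hba : 0 ≤ b - a := by linarith
  constructor
  · intro hθn
    rw [integral_abs_peanoKernel_of_le hn0 (by linarith) (by nlinarith)] at hest
    refine hest.trans_eq ?_
    rw [peanoKernel, Nat.add_sub_cancel, add_sub_cancel_left, div_pow]
    push_cast
    field_simp
    ring
  · intro hθn
    rw [integral_abs_peanoKernel_of_ge hn0 (by nlinarith [hθ.1]) (by nlinarith)] at hest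
    refine hest.trans_eq ?_
    simp only [peanoKernel, Nat.add_sub_cancel, add_sub_cancel_left, div_pow, mul_pow]
    push_cast
    field_simp
    ring
end
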